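/- arXiv:2401.18060 — 2 statements merged into one kernel-verified Lean document; each statement's English description precedes it below -/
import Mathlib

section
/- Let S be a numerical semigroup with S ≠ ℕ. If S has no two consecutive elements among its left elements (i.e., there is no x ∈ ℕ with x ∈ S, x + 1 ∈ S and x + 1 < F(S)), then F(S) ≥ m(S) + 2·#(L(S) \ {0}) − 1, where L(S) = {s ∈ S : s < F(S)}. -/
/-- A numerical semigroup: an additive submonoid of ℕ with finite complement. -/
structure NumericalSemigroup where
  carrier : Set ℕ
  zero_mem : 0 ∈ carrier
  add_mem : ∀ ⦃a b : ℕ⦄, a ∈ carrier → b ∈ carrier → a + b ∈ carrier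
  cofinite : (carrierᶜ : Set ℕ).Finite

namespace NumericalSemigroup

/-- The genus: the number of gaps. -/
noncomputable def genus (S : NumericalSemigroup) : ℕ := S.carrierᶜ.ncard

/-- The multiplicity: the smallest nonzero element. -/
noncomputable def multiplicity (S : NumericalSemigroup) : ℕ :=
  sInf {n : ℕ | n ∈ S.carrier ∧ n ≠ 0}

/-- The Frobenius number: the largest gap. -/
noncomputable def frobenius (S : NumericalSemigroup) : ℕ := sSup S.carrierᶜ

/-- The left elements: the elements of `S` smaller than the Frobenius number. -/
def leftElements (S : NumericalSemigroup) : Set ℕ :=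
  {s : ℕ | s ∈ S.carrier ∧ s < S.frobenius}

end NumericalSemigroup

/-- The gcd of a set of natural numbers: the common divisor that is divisible by
every common divisor (so `setGcd ∅ = 0`). -/
noncomputable def setGcd (A : Set ℕ) : ℕ :=
  sInf {d : ℕ | (∀ a ∈ A, d ∣ a) ∧ ∀ e : ℕ, (∀ a ∈ A, e ∣ a) → e ∣ d}

/-- The constant γ = (5 + √5)/10. -/
noncomputable def gamma : ℝ := (5 + Real.sqrt 5) / 10

/-- `S` belongs to an infinite chain in the semigroup tree. -/
def InInfiniteChain (S : NumericalSemigroup) : Prop :=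
  ∃ f : ℕ → NumericalSemigroup, f 0 = S ∧
    ∀ i : ℕ, (f (i + 1)).carrier ≠ Set.univ ∧
      (f i).carrier = (f (i + 1)).carrier ∪ {(f (i + 1)).frobenius}

/- The nonzero left elements lie in `[m, F)` and contain no two consecutive integers, so together
with their successors they form `2 · #(L(S) \ {0})` distinct elements of `[m, F]`. -/

theorem Set.ncard_union_image_succ {T : Set ℕ} (hT : T.Finite) (hsucc : ∀ x ∈ T, x + 1 ∉ T) :
    (T ∪ (· + 1) '' T).ncard = 2 * T.ncard := by
  have hdisj : Disjoint T ((· + 1) '' T) := by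
    rw [Set.disjoint_right]
    rintro _ ⟨x, hx, rfl⟩
    exact hsucc x hx
  rw [Set.ncard_union_eq hdisj hT (hT.image _),
    Set.ncard_image_of_injective T (add_left_injective 1), two_mul]

theorem Set.two_mul_ncard_le_of_subset_Ico {T : Set ℕ} {a b : ℕ} (hT : T ⊆ Set.Ico a b)
    (hsucc : ∀ x ∈ T, x + 1 ∉ T) : 2 * T.ncard ≤ b + 1 - a := by
  have hsub : T ∪ (· + 1) '' T ⊆ Set.Icc a b := by
    rintro _ (hx | ⟨x, hx, rfl⟩)
    · exact Set.Ico_subset_Icc_self (hT hx)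
    · obtain ⟨hax, hxb⟩ := hT hx
      exact ⟨Nat.le_succ_of_le hax, hxb⟩
  calc 2 * T.ncard = (T ∪ (· + 1) '' T).ncard :=
        (Set.ncard_union_image_succ ((Set.finite_Ico a b).subset hT) hsucc).symm
    _ ≤ (Set.Icc a b).ncard := Set.ncard_le_ncard hsub (Set.finite_Icc a b)
    _ = b + 1 - a := by rw [← Finset.coe_Icc, Set.ncard_coe_finset, Nat.card_Icc]

namespace NumericalSemigroup

variable (S : NumericalSemigroup)

theorem mem_of_frobenius_lt {n : ℕ} (hn : S.frobenius < n) : n ∈ S.carrier := by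
  by_contra hc
  exact (le_csSup S.cofinite.bddAbove hc).not_gt hn

theorem multiplicity_le_of_mem {n : ℕ} (hn : n ∈ S.carrier) (h0 : n ≠ 0) : S.multiplicity ≤ n :=
  Nat.sInf_le ⟨hn, h0⟩

theorem multiplicity_le_frobenius_add_one : S.multiplicity ≤ S.frobenius + 1 :=
  S.multiplicity_le_of_mem (S.mem_of_frobenius_lt (Nat.lt_succ_self _)) (Nat.succ_ne_zero _)

theorem leftElements_diff_zero_subset_Ico :
    S.leftElements \ {0} ⊆ Set.Ico S.multiplicity S.frobenius :=
  fun _ ⟨⟨hs, hsF⟩, h0⟩ => ⟨S.multiplicity_le_of_mem hs h0, hsF⟩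

end NumericalSemigroup

theorem frobenius_ge_of_no_consecutive_general (S : NumericalSemigroup)
    (hnc : ¬ ∃ x : ℕ, x ∈ S.carrier ∧ x + 1 ∈ S.carrier ∧ x + 1 < S.frobenius) :
    S.frobenius + 1 ≥ S.multiplicity + 2 * (S.leftElements \ {0}).ncard := by
  have hsucc : ∀ x ∈ S.leftElements \ {0}, x + 1 ∉ S.leftElements \ {0} :=
    fun x ⟨⟨hx, _⟩, _⟩ ⟨⟨hx1, hx1F⟩, _⟩ => hnc ⟨x, hx, hx1, hx1F⟩
  have hcard := Set.two_mul_ncard_le_of_subset_Ico S.leftElements_diff_zero_subset_Ico hsucc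
  have hm := S.multiplicity_le_frobenius_add_one
  omega

theorem frobenius_ge_of_no_consecutive (S : NumericalSemigroup) (h : S.carrier ≠ Set.univ)
    (hnc : ¬ ∃ x : ℕ, x ∈ S.carrier ∧ x + 1 ∈ S.carrier ∧ x + 1 < S.frobenius) :
    S.frobenius + 1 ≥ S.multiplicity + 2 * (S.leftElements \ {0}).ncard :=
  frobenius_ge_of_no_consecutive_general S hnc
end

section
/- The proportion of numerical semigroups of genus g that belong to an infinite chain in the semigroup tree, among all numerical semigroups of genus g, tends to 0 as g → ∞. -/
namespace NumericalSemigroup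

lemma carrier_inj : ∀ {S T : NumericalSemigroup}, S.carrier = T.carrier → S = T := by
  rintro ⟨c, _, _, _⟩ ⟨c', _, _, _⟩ h
  simp only at h; subst h; rfl

variable {S : NumericalSemigroup}

lemma frob_mem (h : S.carrierᶜ.Nonempty) : S.frobenius ∈ S.carrierᶜ :=
  Nat.sSup_mem h S.cofinite.bddAbove

lemma frob_not_mem (h : S.carrierᶜ.Nonempty) : S.frobenius ∉ S.carrier :=
  frob_mem h

lemma le_frob {x : ℕ} (hx : x ∉ S.carrier) : x ≤ S.frobenius :=
  le_csSup S.cofinite.bddAbove hx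

lemma mem_of_frob_lt {x : ℕ} (hx : S.frobenius < x) : x ∈ S.carrier := by
  by_contra h; exact absurd (le_frob h) (not_le.mpr hx)

lemma frob_pos (h : S.carrierᶜ.Nonempty) : 1 ≤ S.frobenius := by
  rcases Nat.eq_zero_or_pos S.frobenius with h0 | h1
  · exact absurd (h0 ▸ frob_mem h) (by simpa using S.zero_mem)
  · exact h1

lemma compl_nonempty_of_genus (hg : S.genus ≠ 0) : S.carrierᶜ.Nonempty :=
  Set.nonempty_of_ncard_ne_zero hg

lemma gaps_subset : S.carrierᶜ ⊆ ↑(Finset.Icc 1 S.frobenius) := by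
  intro x hx
  simp only [Finset.coe_Icc, Set.mem_Icc]
  refine ⟨?_, le_frob hx⟩
  rcases Nat.eq_zero_or_pos x with rfl | h1
  · exact absurd S.zero_mem hx
  · exact h1

lemma genus_le_frob : S.genus ≤ S.frobenius := by
  have h := Set.ncard_le_ncard gaps_subset (Finset.Icc 1 S.frobenius).finite_toSet
  rw [Set.ncard_coe_finset, Nat.card_Icc] at h
  exact h.trans (by omega)

/-- Pairing bound: the Frobenius number is at most `2 * genus + 1`. -/
lemma frob_le_two_genus_add_one : S.frobenius ≤ 2 * S.genus + 1 := by
  classical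
  rcases Set.eq_empty_or_nonempty S.carrierᶜ with he | hne
  · simp [frobenius, he]
  set F := S.frobenius with hF
  have hFnm : F ∉ S.carrier := frob_not_mem hne
  have key : F / 2 ≤ S.genus := by
    have hmaps : ∀ x ∈ Finset.Icc 1 (F / 2),
        (if x ∈ S.carrier then F - x else x) ∈ S.cofinite.toFinset := by
      intro x hx
      simp only [Finset.mem_Icc] at hx
      by_cases hxc : x ∈ S.carrier
      · simp only [hxc, if_true, Set.Finite.mem_toFinset, Set.mem_compl_iff]
        intro hFx
        have hsum : x + (F - x) ∈ S.carrier := S.add_mem hxc hFx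
        rw [Nat.add_sub_cancel' (by omega : x ≤ F)] at hsum
        exact hFnm hsum
      · simp [Set.Finite.mem_toFinset, hxc]
    have hinj : Set.InjOn (fun x => if x ∈ S.carrier then F - x else x)
        ↑(Finset.Icc 1 (F / 2)) := by
      intro x hx y hy hxy
      simp only [Finset.coe_Icc, Set.mem_Icc] at hx hy
      by_cases hxc : x ∈ S.carrier <;> by_cases hyc : y ∈ S.carrier <;>
        simp only [hxc, hyc, if_true, if_false] at hxy
      · omega
      · have hxy' : x = y := by omega
        exact absurd hxc (hxy' ▸ hyc)
      · have hxy' : x = y := by omega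
        exact absurd hyc (hxy' ▸ hxc)
      · exact hxy
    have hcard := Finset.card_le_card_of_injOn _ hmaps hinj
    rw [Nat.card_Icc] at hcard
    have : S.cofinite.toFinset.card = S.genus := (Set.ncard_eq_toFinset_card _ S.cofinite).symm
    omega
  omega


/-! ### Multiplicity and Kunz coordinates -/

lemma carrier_infinite (S : NumericalSemigroup) : S.carrier.Infinite := by
  have := S.cofinite.infinite_compl (s := S.carrierᶜ)
  simpa using this

lemma exists_nonzero (S : NumericalSemigroup) : ∃ x ∈ S.carrier, x ≠ 0 := by
  obtain ⟨x, hx, hx0⟩ := (carrier_infinite S).exists_gt 0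
  exact ⟨x, hx, by omega⟩

lemma mult_spec (S : NumericalSemigroup) :
    S.multiplicity ∈ S.carrier ∧ S.multiplicity ≠ 0 := by
  have h : {n : ℕ | n ∈ S.carrier ∧ n ≠ 0}.Nonempty := by
    obtain ⟨x, hx, hx0⟩ := exists_nonzero S
    exact ⟨x, hx, hx0⟩
  exact Nat.sInf_mem h

lemma mult_mem (S : NumericalSemigroup) : S.multiplicity ∈ S.carrier := (mult_spec S).1

lemma mult_pos (S : NumericalSemigroup) : 1 ≤ S.multiplicity :=
  Nat.one_le_iff_ne_zero.mpr (mult_spec S).2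

lemma mult_le {S : NumericalSemigroup} {n : ℕ} (hn : n ∈ S.carrier) (h0 : n ≠ 0) :
    S.multiplicity ≤ n :=
  Nat.sInf_le ⟨hn, h0⟩

lemma add_mul_mem {S : NumericalSemigroup} {x y : ℕ} (hx : x ∈ S.carrier)
    (hy : y ∈ S.carrier) : ∀ c : ℕ, x + c * y ∈ S.carrier := by
  intro c
  induction c with
  | zero => simpa using hx
  | succ c ih =>
      have := S.add_mem ih hy
      have he : x + c * y + y = x + (c+1) * y := by ring
      rwa [he] at this

lemma mul_mem {S : NumericalSemigroup} {y : ℕ} (hy : y ∈ S.carrier) (c : ℕ) :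
    c * y ∈ S.carrier := by
  have := add_mul_mem S.zero_mem hy c
  simpa using this

lemma carrier_univ_of_one_mem {S : NumericalSemigroup} (h1 : 1 ∈ S.carrier) :
    S.carrier = Set.univ := by
  ext n
  simp only [Set.mem_univ, iff_true]
  have := mul_mem h1 n
  simpa using this

lemma genus_eq_zero_iff {S : NumericalSemigroup} : S.genus = 0 ↔ S.carrier = Set.univ := by
  constructor
  · intro h
    have : S.carrierᶜ = ∅ := (Set.ncard_eq_zero S.cofinite).mp h
    rwa [Set.compl_empty_iff] at this
  · intro h
    simp [NumericalSemigroup.genus, h]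

lemma two_le_mult_of_genus {S : NumericalSemigroup} (h : S.genus ≠ 0) :
    2 ≤ S.multiplicity := by
  rcases Nat.lt_or_ge S.multiplicity 2 with h2 | h2
  · interval_cases h' : S.multiplicity
    · exact absurd h' (mult_spec S).2
    · exact absurd (genus_eq_zero_iff.mpr (carrier_univ_of_one_mem (h' ▸ mult_mem S))) h
  · exact h2

/-- The Kunz list of a numerical semigroup: entry `i` (0-based) counts the gaps congruent
to `i+1` modulo the multiplicity. -/
noncomputable def kunzList (T : NumericalSemigroup) : List ℕ :=
  (List.range (T.multiplicity - 1)).map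
    (fun i => (T.cofinite.toFinset.filter
        (fun x => x % T.multiplicity = i + 1)).card)

lemma dc_finset_eq_range {s : Finset ℕ} (hdc : ∀ a b : ℕ, a ≤ b → b ∈ s → a ∈ s) :
    s = Finset.range s.card := by
  ext x
  simp only [Finset.mem_range]
  constructor
  · intro hx
    have hsub : Finset.range (x + 1) ⊆ s := by
      intro y hy
      simp only [Finset.mem_range] at hy
      exact hdc y x (by omega) hx
    have := Finset.card_le_card hsub
    rw [Finset.card_range] at this
    omega
  · intro hx
    by_contra hxs
    have hsub : s ⊆ Finset.range x := by
      intro y hy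
      simp only [Finset.mem_range]
      by_contra hyx
      exact hxs (hdc x y (by omega) hy)
    have := Finset.card_le_card hsub
    rw [Finset.card_range] at this
    omega

section Kunz

variable (T : NumericalSemigroup)

/-- count of gaps in residue class `r` -/
noncomputable def kunzK (r : ℕ) : ℕ :=
  (T.cofinite.toFinset.filter (fun x => x % T.multiplicity = r)).card

lemma kunzList_eq : T.kunzList =
    (List.range (T.multiplicity - 1)).map (fun i => kunzK T (i + 1)) := rfl

lemma mem_upward {a b : ℕ} (hab : a ≤ b) (hmod : a % T.multiplicity = b % T.multiplicity)
    (ha : a ∈ T.carrier) : b ∈ T.carrier := by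
  have hdvd : T.multiplicity ∣ b - a := (Nat.modEq_iff_dvd' hab).mp hmod
  obtain ⟨c, hc⟩ := hdvd
  have hb : b = a + c * T.multiplicity := by
    rw [Nat.mul_comm] at hc; omega
  rw [hb]
  exact add_mul_mem ha (mult_mem T) c

lemma kunz_gap_iff (x : ℕ) :
    x ∉ T.carrier ↔ (x % T.multiplicity ≠ 0 ∧
      x / T.multiplicity < kunzK T (x % T.multiplicity)) := by
  classical
  set m := T.multiplicity with hm
  have hm1 : 1 ≤ m := mult_pos T
  have key : ∀ y : ℕ, y = m * (y / m) + y % m := fun y => (Nat.div_add_mod y m).symm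
  rcases Nat.lt_or_ge m 2 with hm2 | hm2
  · -- m = 1 : carrier = univ
    have hmeq : m = 1 := by omega
    have h1 : (1 : ℕ) ∈ T.carrier := by rw [← hmeq]; exact mult_mem T
    have huniv := carrier_univ_of_one_mem h1
    simp [huniv, hmeq, Nat.mod_one]
  -- main case
  set r := x % m with hr
  have hrm : r < m := Nat.mod_lt _ (by omega)
  by_cases hr0 : r = 0
  · simp only [hr0, ne_eq, not_true_eq_false, false_and, iff_false, not_not]
    have hdvd : m ∣ x := Nat.dvd_of_mod_eq_zero (by omega)
    have : x = (x / m) * m := (Nat.div_mul_cancel hdvd).symm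
    rw [this]
    exact mul_mem (mult_mem T) _
  · simp only [ne_eq, hr0, not_false_eq_true, true_and]
    set Tr : Finset ℕ := (T.cofinite.toFinset.filter (fun y => y % m = r)).image (· / m)
      with hTr
    have hmemTr : ∀ t : ℕ, t ∈ Tr ↔ m * t + r ∉ T.carrier := by
      intro t
      simp only [hTr, Finset.mem_image, Finset.mem_filter, Set.Finite.mem_toFinset,
        Set.mem_compl_iff]
      constructor
      · rintro ⟨y, ⟨hy, hymod⟩, hydiv⟩
        have hyeq : y = m * t + r := by
          have h0 := key y
          rw [hydiv, hymod] at h0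
          exact h0
        rwa [← hyeq]
      · intro ht
        refine ⟨m * t + r, ⟨ht, ?_⟩, ?_⟩
        · rw [Nat.mul_add_mod]; exact Nat.mod_eq_of_lt hrm
        · rw [Nat.mul_add_div (by omega), Nat.div_eq_of_lt hrm]
          omega
    have hdc : ∀ a b : ℕ, a ≤ b → b ∈ Tr → a ∈ Tr := by
      intro a b hab hb
      rw [hmemTr] at hb ⊢
      intro hmem
      refine hb (mem_upward T ?_ (by rw [Nat.mul_add_mod, Nat.mul_add_mod]) hmem)
      have : m * a ≤ m * b := Nat.mul_le_mul_left m hab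
      omega
    have hcardTr : Tr.card = kunzK T r := by
      rw [hTr, kunzK, Finset.card_image_of_injOn]
      intro a ha b hb hab
      simp only [Finset.mem_coe, Finset.mem_filter, Set.Finite.mem_toFinset] at ha hb
      have h1 := key a
      have h2 := key b
      rw [ha.2] at h1
      rw [hb.2] at h2
      simp only at hab
      rw [hab] at h1
      omega
    have hrange : Tr = Finset.range (kunzK T r) := by
      rw [← hcardTr]; exact dc_finset_eq_range hdc
    have hx : x = m * (x / m) + r := by rw [hr]; exact key x
    constructor
    · intro hgap
      have : x / m ∈ Tr := by rw [hmemTr, ← hx]; exact hgap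
      rw [hrange, Finset.mem_range] at this
      exact this
    · intro hlt
      have : x / m ∈ Tr := by rw [hrange, Finset.mem_range]; exact hlt
      rw [hmemTr, ← hx] at this
      exact this

lemma list_sum_map_range (f : ℕ → ℕ) (n : ℕ) :
    ((List.range n).map f).sum = ∑ i ∈ Finset.range n, f i := by
  induction n with
  | zero => simp
  | succ n ih => rw [List.range_succ, Finset.sum_range_succ, List.map_append, List.sum_append, ih]; simp

lemma kunzK_zero : kunzK T 0 = 0 := by
  rw [kunzK, Finset.card_eq_zero, Finset.filter_eq_empty_iff]
  intro x hx
  simp only [Set.Finite.mem_toFinset, Set.mem_compl_iff] at hx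
  intro hmod
  have hdvd : T.multiplicity ∣ x := Nat.dvd_of_mod_eq_zero hmod
  have hxeq : x = (x / T.multiplicity) * T.multiplicity := (Nat.div_mul_cancel hdvd).symm
  exact hx (hxeq ▸ mul_mem (mult_mem T) _)

lemma kunzList_sum : T.kunzList.sum = T.genus := by
  classical
  set m := T.multiplicity with hm
  have hm1 : 1 ≤ m := mult_pos T
  rw [kunzList_eq, list_sum_map_range]
  have h1 : ∑ r ∈ Finset.Ico 1 m, kunzK T r = ∑ i ∈ Finset.range (m - 1), kunzK T (i + 1) := by
    rw [Finset.sum_Ico_eq_sum_range]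
    exact Finset.sum_congr rfl (fun i _ => by rw [Nat.add_comm 1 i])
  rw [← h1]
  have h2 : ∑ r ∈ Finset.Ico 0 1, kunzK T r + ∑ r ∈ Finset.Ico 1 m, kunzK T r
      = ∑ r ∈ Finset.Ico 0 m, kunzK T r :=
    Finset.sum_Ico_consecutive _ (by omega) (by omega)
  have h3 : ∑ r ∈ Finset.Ico 0 1, kunzK T r = 0 := by
    simp [kunzK_zero]
  have h4 : ∑ r ∈ Finset.Ico 0 m, kunzK T r = T.genus := by
    rw [← Finset.range_eq_Ico]
    have := Finset.card_eq_sum_card_fiberwise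
      (f := fun x => x % m) (s := T.cofinite.toFinset) (t := Finset.range m)
      (fun x _ => by simp only [Finset.mem_coe, Finset.mem_range]; exact Nat.mod_lt _ (by omega))
    rw [genus, Set.ncard_eq_toFinset_card _ T.cofinite, this]
    rfl
  omega

lemma kunzList_pos : ∀ a ∈ T.kunzList, 0 < a := by
  intro a ha
  rw [kunzList_eq] at ha
  simp only [List.mem_map, List.mem_range] at ha
  obtain ⟨i, hi, rfl⟩ := ha
  have hm1 : 1 ≤ T.multiplicity := mult_pos T
  have him : i + 1 < T.multiplicity := by omega
  rw [kunzK, Finset.card_pos]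
  refine ⟨i + 1, ?_⟩
  simp only [Finset.mem_filter, Set.Finite.mem_toFinset, Set.mem_compl_iff]
  refine ⟨?_, Nat.mod_eq_of_lt him⟩
  intro hmem
  exact absurd (mult_le hmem (by omega)) (by omega)

/-- The set of naturals determined by a Kunz list. -/
def kunzCarrier (l : List ℕ) : Set ℕ :=
  {x | x % (l.length + 1) = 0 ∨ ¬ (x / (l.length + 1) < l.getD (x % (l.length + 1) - 1) 0)}

lemma kunzList_length : T.kunzList.length = T.multiplicity - 1 := by
  rw [kunzList_eq]; simp

lemma kunz_recover : T.carrier = kunzCarrier T.kunzList := by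
  have hm1 : 1 ≤ T.multiplicity := mult_pos T
  have hlen : T.kunzList.length + 1 = T.multiplicity := by
    rw [kunzList_length]; omega
  ext x
  rw [kunzCarrier, Set.mem_setOf_eq, hlen]
  by_cases hr0 : x % T.multiplicity = 0
  · simp only [hr0, true_or, iff_true]
    have hdvd : T.multiplicity ∣ x := Nat.dvd_of_mod_eq_zero hr0
    have hxeq : x = (x / T.multiplicity) * T.multiplicity := (Nat.div_mul_cancel hdvd).symm
    exact hxeq ▸ mul_mem (mult_mem T) _
  · have hrm : x % T.multiplicity < T.multiplicity := Nat.mod_lt _ (by omega)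
    have hget : T.kunzList.getD (x % T.multiplicity - 1) 0 = kunzK T (x % T.multiplicity) := by
      have hidx : x % T.multiplicity - 1 < T.kunzList.length := by
        rw [kunzList_length]; omega
      rw [List.getD_eq_getElem _ _ hidx]
      rw [List.getElem_of_eq (kunzList_eq T) (by simpa [kunzList_length] using hidx)]
      simp only [List.getElem_map, List.getElem_range]
      congr 1
      omega
    rw [hget]
    have hiff := kunz_gap_iff T x
    constructor
    · intro hmem
      right
      intro hlt
      exact (hiff.mpr ⟨hr0, hlt⟩) hmem
    · rintro (h | h)
      · exact absurd h hr0
      · by_contra hmem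
        exact h (hiff.mp hmem).2

end Kunz

/-! ### Counting lists with positive entries and bounded sum -/

lemma sum_pow_pred (h : ℕ) : ∑ j ∈ Finset.range (h + 1), 2 ^ (j - 1) = 2 ^ h := by
  induction h with
  | zero => simp
  | succ h ih =>
      rw [Finset.sum_range_succ, ih]
      have : (h + 1) - 1 = h := by omega
      rw [this]
      ring

lemma lists_injection (h : ℕ) :
    ∃ φ : {l : List ℕ // (∀ x ∈ l, 0 < x) ∧ l.sum ≤ h} →
      Σ j : Fin (h + 1), Composition j, Function.Injective φ := by
  classical
  set φ : {l : List ℕ // (∀ x ∈ l, 0 < x) ∧ l.sum ≤ h} →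
      Σ j : Fin (h + 1), Composition j :=
    fun l => ⟨⟨l.1.sum, by omega⟩, ⟨l.1, fun {i} hi => l.2.1 i hi, rfl⟩⟩ with hφ
  refine ⟨φ, ?_⟩
  intro a b hab
  have : (φ a).2.blocks = (φ b).2.blocks := by
    rw [hab]
  apply Subtype.ext
  simpa [hφ] using this

lemma lists_finite (h : ℕ) :
    Finite {l : List ℕ // (∀ x ∈ l, 0 < x) ∧ l.sum ≤ h} := by
  obtain ⟨φ, hφ⟩ := lists_injection h
  exact Finite.of_injective φ hφ

lemma card_lists (h : ℕ) :
    Nat.card {l : List ℕ // (∀ x ∈ l, 0 < x) ∧ l.sum ≤ h} ≤ 2 ^ h := by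
  obtain ⟨φ, hφ⟩ := lists_injection h
  have := Nat.card_le_card_of_injective φ hφ
  refine this.trans ?_
  rw [Nat.card_eq_fintype_card, Fintype.card_sigma]
  have : ∀ j : Fin (h + 1), Fintype.card (Composition j) = 2 ^ ((j : ℕ) - 1) := by
    intro j; exact composition_card j
  rw [Fintype.sum_congr _ _ this, Fin.sum_univ_eq_sum_range (fun j => 2 ^ (j - 1))]
  rw [sum_pow_pred]

/-! ### The scaled semigroup -/

def scaled (S : NumericalSemigroup) (d : ℕ) (hd : 1 ≤ d) (hne : S.carrierᶜ.Nonempty) :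
    NumericalSemigroup where
  carrier := {t | (d * t ∈ S.carrier ∧ d * t < S.frobenius) ∨ S.frobenius < d * t}
  zero_mem := Or.inl ⟨by simpa using S.zero_mem, by rw [Nat.mul_zero]; exact frob_pos hne⟩
  add_mem := by
    rintro a b (⟨ha, ha'⟩ | ha) (⟨hb, hb'⟩ | hb) <;>
      simp only [Set.mem_setOf_eq, Nat.mul_add] at *
    · have hmem : d * a + d * b ∈ S.carrier := S.add_mem ha hb
      rcases lt_trichotomy (d * a + d * b) S.frobenius with h | h | h
      · exact Or.inl ⟨hmem, h⟩
      · exact absurd (h ▸ hmem) (frob_not_mem hne)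
      · exact Or.inr h
    · exact Or.inr (by omega)
    · exact Or.inr (by omega)
    · exact Or.inr (by omega)
  cofinite := by
    apply (Set.finite_Iic S.frobenius).subset
    intro t ht
    simp only [Set.mem_compl_iff, Set.mem_setOf_eq, not_or, not_and, not_lt] at ht
    have h1 : t ≤ d * t := Nat.le_mul_of_pos_left t (by omega)
    exact Set.mem_Iic.mpr (le_trans h1 ht.2)

variable {S : NumericalSemigroup} {d : ℕ}

lemma scaled_compl (hd : 1 ≤ d) (hne : S.carrierᶜ.Nonempty) :
    (scaled S d hd hne).carrierᶜ = {t | d * t ∉ S.carrier} := by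
  ext t
  simp only [scaled, Set.mem_compl_iff, Set.mem_setOf_eq, not_or, not_and, not_lt]
  constructor
  · rintro ⟨h1, h2⟩ hmem
    have := h1 hmem
    have heq : d * t = S.frobenius := by omega
    exact frob_not_mem hne (heq ▸ hmem)
  · intro h
    exact ⟨fun hmem => absurd hmem h, le_frob h⟩

lemma scaled_genus_le (hd2 : 2 ≤ d) (hne : S.carrierᶜ.Nonempty)
    (hdvd : ∀ x ∈ S.leftElements, d ∣ x) :
    (scaled S d (by omega) hne).genus ≤ S.genus / 2 + 1 := by
  classical
  have hd : (1 : ℕ) ≤ d := by omega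
  set F := S.frobenius with hF
  have himg : (fun t => d * t) '' (scaled S d (by omega : 1 ≤ d) hne).carrierᶜ
      = S.carrierᶜ ∩ {x | d ∣ x} := by
    rw [scaled_compl]
    ext x
    simp only [Set.mem_image, Set.mem_setOf_eq, Set.mem_inter_iff, Set.mem_compl_iff]
    constructor
    · rintro ⟨t, ht, rfl⟩
      exact ⟨ht, ⟨t, rfl⟩⟩
    · rintro ⟨hx, c, rfl⟩
      exact ⟨c, hx, rfl⟩
  have hgen : (scaled S d (by omega : 1 ≤ d) hne).genus
      = (S.carrierᶜ ∩ {x | d ∣ x}).ncard := by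
    rw [NumericalSemigroup.genus, ← himg,
      Set.ncard_image_of_injective _ (mul_right_injective₀ (by omega : d ≠ 0))]
  set A := S.carrierᶜ ∩ {x | d ∣ x} with hA
  set B := S.carrierᶜ \ {x | d ∣ x} with hB
  have hAfin : A.Finite := S.cofinite.subset Set.inter_subset_left
  have hBfin : B.Finite := S.cofinite.subset Set.diff_subset
  have hunion : A ∪ B = S.carrierᶜ := Set.inter_union_diff _ _
  have hdisj : Disjoint A B := Set.disjoint_of_subset_left Set.inter_subset_right
    Set.disjoint_sdiff_right
  have hsplit : A.ncard + B.ncard = S.genus := by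
    rw [NumericalSemigroup.genus, ← hunion, Set.ncard_union_eq hdisj hAfin hBfin]
  -- lower bound for B : the non-multiples of d in [1, F-1]
  set NMf : Finset ℕ := (Finset.Ico 1 F).filter (fun x => ¬ d ∣ x) with hNMf
  have hNMsub : ↑NMf ⊆ B := by
    intro x hx
    simp only [hNMf, Finset.coe_filter, Finset.mem_Ico, Set.mem_setOf_eq] at hx
    obtain ⟨⟨hx1, hxF⟩, hnd⟩ := hx
    rw [hB]
    refine ⟨?_, hnd⟩
    intro hmem
    exact hnd (hdvd x ⟨hmem, hxF⟩)
  have hBcard : NMf.card ≤ B.ncard := by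
    have := Set.ncard_le_ncard hNMsub hBfin
    rwa [Set.ncard_coe_finset] at this
  -- card of NMf
  have hmult_card : ((Finset.Ico 1 F).filter (fun x => d ∣ x)).card ≤ (F - 1) / 2 := by
    have hmaps : ∀ x ∈ (Finset.Ico 1 F).filter (fun x => d ∣ x),
        x / d ∈ Finset.Icc 1 ((F - 1) / 2) := by
      intro x hx
      simp only [Finset.mem_filter, Finset.mem_Ico] at hx
      obtain ⟨⟨hx1, hxF⟩, hdx⟩ := hx
      have hdlex : d ≤ x := Nat.le_of_dvd (by omega) hdx
      have h1 : 1 ≤ x / d := (Nat.one_le_div_iff (by omega)).mpr hdlex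
      have h2 : x / d ≤ x / 2 := Nat.div_le_div_left hd2 (by omega)
      have h3 : x / 2 ≤ (F - 1) / 2 := Nat.div_le_div_right (by omega)
      simp only [Finset.mem_Icc]
      omega
    have hinj : Set.InjOn (fun x => x / d)
        ↑((Finset.Ico 1 F).filter (fun x => d ∣ x)) := by
      intro a ha b hb hab
      simp only [Finset.coe_filter, Finset.mem_Ico, Set.mem_setOf_eq] at ha hb
      have h1 : a / d * d = a := Nat.div_mul_cancel ha.2
      have h2 : b / d * d = b := Nat.div_mul_cancel hb.2
      simp only at hab
      rw [← h1, ← h2, hab]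
    have := Finset.card_le_card_of_injOn _ hmaps hinj
    rwa [Nat.card_Icc, Nat.add_sub_cancel] at this
  have hNMcard : (F - 1) - (F - 1) / 2 ≤ NMf.card := by
    have := Finset.card_filter_add_card_filter_not
      (s := Finset.Ico 1 F) (p := fun x => d ∣ x)
    rw [Nat.card_Ico] at this
    have : ((Finset.Ico 1 F).filter (fun x => d ∣ x)).card + NMf.card = F - 1 := by
      rw [hNMf]; omega
    omega
  have hgF : S.genus ≤ F := genus_le_frob
  rw [hgen]
  omega

lemma scaled_recover (hd : 1 ≤ d) (hne : S.carrierᶜ.Nonempty)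
    (hdvd : ∀ x ∈ S.leftElements, d ∣ x) :
    S.carrier = {x | (d ∣ x ∧ x / d ∈ (scaled S d hd hne).carrier ∧ x < S.frobenius)
      ∨ S.frobenius < x} := by
  ext x
  simp only [Set.mem_setOf_eq]
  constructor
  · intro hx
    rcases lt_trichotomy x S.frobenius with h | h | h
    · left
      have hdx : d ∣ x := hdvd x ⟨hx, h⟩
      have hcancel : d * (x / d) = x := Nat.mul_div_cancel' hdx
      refine ⟨hdx, ?_, h⟩
      show (d * (x / d) ∈ S.carrier ∧ d * (x / d) < S.frobenius) ∨ S.frobenius < d * (x / d)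
      rw [hcancel]
      exact Or.inl ⟨hx, h⟩
    · exact absurd (h ▸ hx) (frob_not_mem hne)
    · exact Or.inr h
  · rintro (⟨hdx, hmem, hlt⟩ | h)
    · have hcancel : d * (x / d) = x := Nat.mul_div_cancel' hdx
      rcases hmem with ⟨hmem, _⟩ | hgt
      · rwa [hcancel] at hmem
      · rw [hcancel] at hgt; omega
    · exact mem_of_frob_lt h

/-! ### Additively closed sets with infinite complement have a common divisor -/

lemma addclosed_nsmul {M : Set ℕ} (hadd : ∀ a ∈ M, ∀ b ∈ M, a + b ∈ M) (h0 : 0 ∈ M)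
    {x : ℕ} (hx : x ∈ M) : ∀ c : ℕ, c * x ∈ M := by
  intro c
  induction c with
  | zero => simpa using h0
  | succ c ih =>
      have := hadd _ ih _ hx
      have he : c * x + x = (c + 1) * x := by ring
      rwa [he] at this

lemma exists_common_divisor {M : Set ℕ} (h0 : 0 ∈ M)
    (hadd : ∀ a ∈ M, ∀ b ∈ M, a + b ∈ M) (hinf : Mᶜ.Infinite) :
    ∃ d : ℕ, 2 ≤ d ∧ ∀ x ∈ M, d ∣ x := by
  classical
  by_cases hM : ∀ x ∈ M, x = 0
  · exact ⟨2, le_refl 2, fun x hx => by rw [hM x hx]; exact dvd_zero 2⟩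
  push_neg at hM
  obtain ⟨x₀, hx₀, hx₀0⟩ := hM
  -- the subgroup of ℤ generated by M
  set Mz : Set ℤ := (fun n : ℕ => (n : ℤ)) '' M with hMz
  set H := AddSubgroup.closure Mz with hH
  obtain ⟨a, ha⟩ := Int.subgroup_cyclic H
  have hdvd : ∀ x ∈ M, a ∣ (x : ℤ) := by
    intro x hx
    have hxH : (x : ℤ) ∈ H := AddSubgroup.subset_closure ⟨x, hx, rfl⟩
    rw [ha, AddSubgroup.mem_closure_singleton] at hxH
    obtain ⟨n, hn⟩ := hxH
    exact ⟨n, by rw [← hn, zsmul_eq_mul, Int.cast_id]; ring⟩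
  have hdvdN : ∀ x ∈ M, a.natAbs ∣ x := by
    intro x hx
    have := (Int.natAbs_dvd_natAbs).mpr (hdvd x hx)
    simpa using this
  rcases Nat.lt_or_ge a.natAbs 2 with hD2 | hD2
  · exfalso
    have h01 : a.natAbs = 0 ∨ a.natAbs = 1 := by omega
    rcases h01 with hDval | hDval
    · -- D = 0 : all elements of M are 0
      have : x₀ = 0 := by
        have := hdvdN x₀ hx₀
        rw [hDval] at this
        simpa using this
      exact hx₀0 this
    · -- D = 1 : M is cofinite, contradiction
      -- H contains 1
      have h1H : (1 : ℤ) ∈ H := by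
        have haH : a ∈ H := by
          rw [ha]; exact AddSubgroup.subset_closure rfl
        rcases Int.natAbs_eq a with h | h
        · rw [hDval] at h
          rw [h] at haH
          simpa using haH
        · rw [hDval] at h
          have := AddSubgroup.neg_mem H haH
          rw [h] at this
          simpa using this
      -- H is contained in the set of differences of elements of M
      set Dgrp : AddSubgroup ℤ :=
        { carrier := {z : ℤ | ∃ p ∈ M, ∃ q ∈ M, z = (p : ℤ) - (q : ℤ)}
          zero_mem' := ⟨0, h0, 0, h0, by ring⟩
          add_mem' := by
            rintro z w ⟨p, hp, q, hq, rfl⟩ ⟨p', hp', q', hq', rfl⟩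
            exact ⟨p + p', hadd _ hp _ hp', q + q', hadd _ hq _ hq', by push_cast; ring⟩
          neg_mem' := by
            rintro z ⟨p, hp, q, hq, rfl⟩
            exact ⟨q, hq, p, hp, by ring⟩ } with hDgrp
      have hHD : H ≤ Dgrp := by
        rw [hH]
        apply AddSubgroup.closure_le Dgrp |>.mpr
        rintro z ⟨p, hp, rfl⟩
        exact ⟨p, hp, 0, h0, by ring⟩
      obtain ⟨p, hp, q, hq, hpq⟩ := hHD h1H
      have hpq' : p = q + 1 := by omega
      -- q and q + 1 belong to M; all n ≥ q * q lie in M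
      have hmem_large : ∀ n : ℕ, q * q ≤ n → n ∈ M := by
        intro n hn
        rcases Nat.eq_zero_or_pos q with rfl | hq1
        · -- q = 0 : 1 ∈ M
          have h1M : 1 ∈ M := by rwa [hpq'] at hp
          have := addclosed_nsmul hadd h0 h1M n
          simpa using this
        · set s := n / q with hs
          set r := n % q with hr
          have hdm : q * s + r = n := Nat.div_add_mod n q
          have hrq : r < q := Nat.mod_lt _ (by omega)
          have hsq : q ≤ s := by
            rw [hs]
            exact (Nat.le_div_iff_mul_le (by omega)).mpr (by nlinarith)
          have hid : (s - r) * q + r * (q + 1) = n := by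
            have h1 : (s - r) * q = s * q - r * q := Nat.sub_mul s r q
            have h2 : r * q ≤ s * q := Nat.mul_le_mul_right q (by omega)
            have h3 : q * s = s * q := Nat.mul_comm q s
            have h4 : r * (q + 1) = r * q + r := by ring
            omega
          rw [← hid]
          exact hadd _ (addclosed_nsmul hadd h0 hq (s - r)) _
            (addclosed_nsmul hadd h0 (hpq' ▸ hp) r)
      have : Mᶜ ⊆ {n : ℕ | n < q * q} := by
        intro n hn
        simp only [Set.mem_compl_iff] at hn
        by_contra hlt
        simp only [Set.mem_setOf_eq, not_lt] at hlt
        exact hn (hmem_large n hlt)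
      exact hinf ((Set.finite_lt_nat (q * q)).subset this)
  · exact ⟨a.natAbs, hD2, hdvdN⟩

/-! ### Chains force a common divisor of the left elements -/

lemma chain_common_divisor {S : NumericalSemigroup} (hne : S.carrierᶜ.Nonempty)
    (hc : InInfiniteChain S) :
    ∃ d : ℕ, 2 ≤ d ∧ ∀ x ∈ S.leftElements, d ∣ x := by
  obtain ⟨f, hf0, hf⟩ := hc
  have hne_i : ∀ i, (f i).carrierᶜ.Nonempty := by
    intro i
    cases i with
    | zero => rw [hf0]; exact hne
    | succ i => exact Set.nonempty_compl.mpr (hf i).1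
  have hsub : ∀ i, (f (i + 1)).carrier ⊆ (f i).carrier := by
    intro i
    rw [(hf i).2]
    exact Set.subset_union_left
  have hFmem : ∀ i, (f (i + 1)).frobenius ∈ (f i).carrier := by
    intro i
    rw [(hf i).2]
    exact Set.mem_union_right _ rfl
  have hmono : ∀ i, (f i).frobenius < (f (i + 1)).frobenius := by
    intro i
    have h1 : (f i).frobenius ∉ (f (i + 1)).carrier := fun hmem =>
      frob_not_mem (hne_i i) (hsub i hmem)
    have h2 : (f i).frobenius ≤ (f (i + 1)).frobenius := le_frob h1
    have h3 : (f i).frobenius ≠ (f (i + 1)).frobenius := by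
      intro heq
      exact frob_not_mem (hne_i i) (heq ▸ hFmem i)
    omega
  have hfrob_ge : ∀ i, (f 0).frobenius ≤ (f i).frobenius := by
    intro i
    induction i with
    | zero => exact le_refl _
    | succ i ih => exact le_trans ih (le_of_lt (hmono i))
  set M : Set ℕ := ⋂ i, (f i).carrier with hM
  have hLM : ∀ x ∈ S.leftElements, x ∈ M := by
    rintro x ⟨hxS, hxF⟩
    simp only [hM, Set.mem_iInter]
    intro i
    induction i with
    | zero => rw [hf0]; exact hxS
    | succ i ih =>
        have hxlt : x < (f (i + 1)).frobenius := by
          have := hfrob_ge (i + 1)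
          rw [hf0] at this
          omega
        have := (hf i).2 ▸ ih
        rcases this with h | h
        · exact h
        · simp only [Set.mem_singleton_iff] at h
          omega
  have h0M : 0 ∈ M := Set.mem_iInter.mpr (fun i => (f i).zero_mem)
  have haddM : ∀ a ∈ M, ∀ b ∈ M, a + b ∈ M := by
    intro a ha b hb
    simp only [hM, Set.mem_iInter] at *
    exact fun i => (f i).add_mem (ha i) (hb i)
  have hinfM : Mᶜ.Infinite := by
    have hsm : StrictMono (fun i : ℕ => (f (i + 1)).frobenius) :=
      strictMono_nat_of_lt_succ (fun i => hmono (i + 1))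
    apply Set.infinite_of_injective_forall_mem hsm.injective
    intro i
    simp only [Set.mem_compl_iff, hM, Set.mem_iInter, not_forall]
    exact ⟨i + 1, frob_not_mem (hne_i (i + 1))⟩
  obtain ⟨dd, hdd2, hdddvd⟩ := exists_common_divisor h0M haddM hinfM
  exact ⟨dd, hdd2, fun x hx => hdddvd x (hLM x hx)⟩


/-! ### Finiteness of the set of semigroups of given genus -/

lemma genus_set_finite (g : ℕ) : {S : NumericalSemigroup | S.genus = g}.Finite := by
  classical
  rw [← Set.finite_coe_iff]
  have hmap : ∀ S : ↥{S : NumericalSemigroup | S.genus = g},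
      S.1.cofinite.toFinset ∈ (Finset.range (2 * g + 2)).powerset := by
    intro S
    rw [Finset.mem_powerset]
    intro x hx
    rw [Set.Finite.mem_toFinset] at hx
    have h1 : x ≤ S.1.frobenius := le_frob hx
    have h2 : S.1.frobenius ≤ 2 * S.1.genus + 1 := frob_le_two_genus_add_one
    have h3 : S.1.genus = g := S.2
    rw [Finset.mem_range]
    omega
  have hinj : Function.Injective
      (fun S : ↥{S : NumericalSemigroup | S.genus = g} =>
        (⟨S.1.cofinite.toFinset, hmap S⟩ :
          {A : Finset ℕ // A ∈ (Finset.range (2 * g + 2)).powerset})) := by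
    intro S T hST
    simp only [Subtype.mk.injEq] at hST
    have h1 : S.1.carrierᶜ = T.1.carrierᶜ := by
      rw [← Set.Finite.coe_toFinset S.1.cofinite, ← Set.Finite.coe_toFinset T.1.cofinite, hST]
    exact Subtype.ext (carrier_inj (compl_inj_iff.mp h1))
  exact Finite.of_injective _ hinj

/-! ### Lower bound: many numerical semigroups of genus g -/

def blockSemigroup (k : ℕ) (X : Finset ℕ) (hX : X ⊆ Finset.Icc (k + 1) (2 * k)) :
    NumericalSemigroup where
  carrier := {n | n = 0 ∨ n ∈ X ∨ 2 * k + 2 ≤ n}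
  zero_mem := Or.inl rfl
  add_mem := by
    have hXb : ∀ x ∈ X, k + 1 ≤ x ∧ x ≤ 2 * k := fun x hx => Finset.mem_Icc.mp (hX hx)
    rintro a b (rfl | ha | ha) (rfl | hb | hb) <;> simp only [Set.mem_setOf_eq]
    · left; trivial
    · right; left; simpa using hb
    · right; right; omega
    · right; left; simpa using ha
    · right; right
      have h1 := hXb a ha; have h2 := hXb b hb; omega
    · right; right
      have h1 := hXb a ha; omega
    · right; right; omega
    · right; right
      have h2 := hXb b hb; omega
    · right; right; omega
  cofinite := by
    apply (Set.finite_lt_nat (2 * k + 2)).subset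
    intro n hn
    simp only [Set.mem_compl_iff, Set.mem_setOf_eq, not_or, not_le] at hn
    exact hn.2.2

lemma blockSemigroup_genus (k : ℕ) (X : Finset ℕ) (hX : X ⊆ Finset.Icc (k + 1) (2 * k)) :
    (blockSemigroup k X hX).genus = 2 * k + 1 - X.card := by
  classical
  have hcompl : (blockSemigroup k X hX).carrierᶜ = ↑(Finset.Icc 1 (2 * k + 1) \ X) := by
    ext n
    simp only [blockSemigroup, Set.mem_compl_iff, Set.mem_setOf_eq, not_or, not_le,
      Finset.coe_sdiff, Set.mem_diff, Finset.coe_Icc, Set.mem_Icc, Finset.mem_coe]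
    constructor
    · rintro ⟨h0, hX', hlt⟩
      exact ⟨⟨by omega, by omega⟩, hX'⟩
    · rintro ⟨⟨h1, h2⟩, hX'⟩
      refine ⟨by omega, hX', by omega⟩
  rw [NumericalSemigroup.genus, hcompl, Set.ncard_coe_finset]
  have hX' : X ⊆ Finset.Icc 1 (2 * k + 1) := fun x hx => by
    have := Finset.mem_Icc.mp (hX hx)
    rw [Finset.mem_Icc]
    omega
  rw [Finset.card_sdiff_of_subset hX', Nat.card_Icc]
  omega

lemma blockSemigroup_inj (k : ℕ) (X Y : Finset ℕ)
    (hX : X ⊆ Finset.Icc (k + 1) (2 * k)) (hY : Y ⊆ Finset.Icc (k + 1) (2 * k))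
    (h : blockSemigroup k X hX = blockSemigroup k Y hY) : X = Y := by
  have hc : (blockSemigroup k X hX).carrier = (blockSemigroup k Y hY).carrier := by rw [h]
  ext x
  constructor
  · intro hx
    have hb := Finset.mem_Icc.mp (hX hx)
    have hmem : x ∈ (blockSemigroup k X hX).carrier := by
      simp only [blockSemigroup, Set.mem_setOf_eq]
      exact Or.inr (Or.inl hx)
    rw [hc] at hmem
    simp only [blockSemigroup, Set.mem_setOf_eq] at hmem
    rcases hmem with h0 | hY' | hge
    · omega
    · exact hY'
    · omega
  · intro hx
    have hb := Finset.mem_Icc.mp (hY hx)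
    have hmem : x ∈ (blockSemigroup k Y hY).carrier := by
      simp only [blockSemigroup, Set.mem_setOf_eq]
      exact Or.inr (Or.inl hx)
    rw [← hc] at hmem
    simp only [blockSemigroup, Set.mem_setOf_eq] at hmem
    rcases hmem with h0 | hX' | hge
    · omega
    · exact hX'
    · omega

lemma count_lower (g : ℕ) (hg : 10 ≤ g) :
    Nat.centralBinom ((g - 1) / 3) ≤ 2 * {S : NumericalSemigroup | S.genus = g}.ncard := by
  classical
  set m := (g - 1) / 3 with hm
  set k := if 3 ∣ g then 2 * m + 1 else 2 * m with hk
  set j := 2 * k + 1 - g with hj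
  have hm1 : 1 ≤ m := by omega
  have hdvd3 : 3 ∣ g ↔ g % 3 = 0 := by omega
  have hkj : j ≤ k ∧ g = 2 * k + 1 - j ∧ j + g = 2 * k + 1 := by
    by_cases h3 : 3 ∣ g
    · simp only [hk, h3, if_true, hj]
      omega
    · simp only [hk, h3, if_false, hj]
      rw [hdvd3] at h3
      omega
  have key : ∀ X : ↥((Finset.Icc (k + 1) (2 * k)).powersetCard j),
      ∃ hs : (X : Finset ℕ) ⊆ Finset.Icc (k + 1) (2 * k),
        (blockSemigroup k X hs).genus = g := by
    intro X
    have hX := Finset.mem_powersetCard.mp X.2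
    refine ⟨hX.1, ?_⟩
    rw [blockSemigroup_genus, hX.2]
    omega
  choose hsub hgen using key
  have hfin : Finite ↥{S : NumericalSemigroup | S.genus = g} :=
    Set.finite_coe_iff.mpr (genus_set_finite g)
  have hinj : Function.Injective (fun X : ↥((Finset.Icc (k + 1) (2 * k)).powersetCard j) =>
      (⟨blockSemigroup k X (hsub X), hgen X⟩ :
        ↥{S : NumericalSemigroup | S.genus = g})) := by
    intro X Y hXY
    simp only [Subtype.mk.injEq] at hXY
    exact Subtype.ext (blockSemigroup_inj k X Y (hsub X) (hsub Y) hXY)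
  have hcard := Nat.card_le_card_of_injective _ hinj
  rw [Nat.card_eq_fintype_card (α := ↥((Finset.Icc (k + 1) (2 * k)).powersetCard j)),
    Fintype.card_coe, Finset.card_powersetCard, Nat.card_Icc] at hcard
  rw [Nat.card_coe_set_eq] at hcard
  have hIcc : 2 * k + 1 - (k + 1) = k := by omega
  rw [hIcc] at hcard
  have hbin : Nat.centralBinom m ≤ 2 * (k.choose j) := by
    by_cases h3 : 3 ∣ g
    · have hkv : k = 2 * m + 1 := by simp [hk, h3]
      have hjv : j = m := by
        rw [hdvd3] at h3
        omega
      rw [hkv, hjv]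
      have h1 : (2 * m).choose m ≤ (2 * m + 1).choose m :=
        Nat.choose_le_choose m (by omega)
      rw [Nat.centralBinom]
      omega
    · have hkv : k = 2 * m := by simp [hk, h3]
      rw [hdvd3] at h3
      rcases Nat.lt_or_ge (g % 3) 2 with h1 | h2
      · -- g % 3 = 1 : j = m
        have hjv : j = m := by omega
        rw [hkv, hjv, Nat.centralBinom]
        omega
      · -- g % 3 = 2 : j = m - 1
        have hjv : j = m - 1 := by omega
        rw [hkv, hjv]
        have hid := Nat.choose_succ_right_eq (2 * m) (m - 1)
        have hm' : m - 1 + 1 = m := by omega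
        rw [hm'] at hid
        have h2m : 2 * m - (m - 1) = m + 1 := by omega
        rw [h2m] at hid
        have hfin : Nat.centralBinom m * m ≤ 2 * ((2 * m).choose (m - 1)) * m := by
          rw [Nat.centralBinom]
          nlinarith [hid]
        nlinarith [hfin, hm1]
  omega


/-! ### Upper bound on the number of chain semigroups of genus g -/

lemma count_upper (g : ℕ) (hg : 1 ≤ g) :
    {S : NumericalSemigroup | S.genus = g ∧ InInfiniteChain S}.ncard
      ≤ (2 * g + 2) * ((2 * g + 2) * 2 ^ (g / 2 + 1)) := by
  classical
  set 𝒜 := {S : NumericalSemigroup | S.genus = g ∧ InInfiniteChain S} with h𝒜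
  have hdata : ∀ S : ↥𝒜, ∃ (dv Fv : ℕ) (l : List ℕ),
      dv < 2 * g + 2 ∧ Fv < 2 * g + 2 ∧ (∀ x ∈ l, 0 < x) ∧ l.sum ≤ g / 2 + 1 ∧
      S.1.carrier = {x | (dv ∣ x ∧ x / dv ∈ kunzCarrier l ∧ x < Fv) ∨ Fv < x} := by
    rintro ⟨S, hgen, hchain⟩
    have hne : S.carrierᶜ.Nonempty :=
      compl_nonempty_of_genus (by rw [hgen]; omega)
    have hfrob : S.frobenius ≤ 2 * g + 1 := by
      have := frob_le_two_genus_add_one (S := S)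
      rw [hgen] at this
      omega
    obtain ⟨d₀, hd₀2, hd₀dvd⟩ := chain_common_divisor hne hchain
    have hdd : ∃ dv : ℕ, 2 ≤ dv ∧ dv < 2 * g + 2 ∧ ∀ x ∈ S.leftElements, dv ∣ x := by
      by_cases hL : ∃ x ∈ S.leftElements, x ≠ 0
      · obtain ⟨x, hxL, hx0⟩ := hL
        have h1 : d₀ ≤ x := Nat.le_of_dvd (by omega) (hd₀dvd x hxL)
        have h2 : x < S.frobenius := hxL.2
        exact ⟨d₀, hd₀2, by omega, hd₀dvd⟩
      · push_neg at hL
        refine ⟨2, le_refl 2, by omega, ?_⟩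
        intro x hx
        rw [hL x hx]
        exact dvd_zero 2
    obtain ⟨dv, hdv2, hdvlt, hdvdvd⟩ := hdd
    have hdv1 : (1 : ℕ) ≤ dv := by omega
    set T := scaled S dv hdv1 hne with hT
    refine ⟨dv, S.frobenius, T.kunzList, hdvlt, by omega, kunzList_pos T, ?_, ?_⟩
    · rw [kunzList_sum]
      have := scaled_genus_le (S := S) hdv2 hne hdvdvd
      rw [hgen] at this
      exact this
    · have h1 := scaled_recover (S := S) hdv1 hne hdvdvd
      have h2 := kunz_recover T
      rw [h1, ← h2]
  choose dfun Ffun lfun hd1 hd2 hd3 hd4 hd5 using hdata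
  set Θ : ↥𝒜 → Fin (2 * g + 2) × Fin (2 * g + 2) ×
      {l : List ℕ // (∀ x ∈ l, 0 < x) ∧ l.sum ≤ g / 2 + 1} :=
    fun S => (⟨dfun S, hd1 S⟩, ⟨Ffun S, hd2 S⟩, ⟨lfun S, hd3 S, hd4 S⟩) with hΘ
  have hinj : Function.Injective Θ := by
    intro a b hab
    simp only [hΘ, Prod.mk.injEq, Fin.mk.injEq, Subtype.mk.injEq] at hab
    obtain ⟨hda, hFa, hla⟩ := hab
    apply Subtype.ext
    apply carrier_inj
    rw [hd5 a, hd5 b, hda, hFa, hla]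
  have : Finite ({l : List ℕ // (∀ x ∈ l, 0 < x) ∧ l.sum ≤ g / 2 + 1}) := lists_finite _
  have hcard := Nat.card_le_card_of_injective Θ hinj
  rw [Nat.card_prod, Nat.card_prod, Nat.card_eq_fintype_card (α := Fin (2 * g + 2)),
    Fintype.card_fin] at hcard
  rw [← Nat.card_coe_set_eq]
  refine hcard.trans ?_
  have hl := card_lists (g / 2 + 1)
  gcongr


/-! ### The key counting inequality -/

lemma key_ineq (g : ℕ) (hg : 4000 ≤ g) :
    {S : NumericalSemigroup | S.genus = g ∧ InInfiniteChain S}.ncard * 2 ^ (g / 19)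
      ≤ {S : NumericalSemigroup | S.genus = g}.ncard := by
  set a := {S : NumericalSemigroup | S.genus = g ∧ InInfiniteChain S}.ncard with ha
  set n := {S : NumericalSemigroup | S.genus = g}.ncard with hn
  set m := (g - 1) / 3 with hm
  have h4m : 4 ≤ m := by omega
  have hA := count_upper g (by omega)
  have hN := count_lower g (by omega)
  rw [← hm] at hN
  have hcb := Nat.four_pow_lt_mul_centralBinom m (by omega)
  -- polynomial bound
  have hp0 : g / 36 + 1 ≤ 2 ^ (g / 36) := by
    have := Nat.lt_two_pow_self (n := g / 36)
    omega
  have hp1 : 2 * g + 2 ≤ 72 * 2 ^ (g / 36) := by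
    have h1 : 2 * g + 2 ≤ 72 * (g / 36 + 1) := by omega
    have h2 : 72 * (g / 36 + 1) ≤ 72 * 2 ^ (g / 36) := Nat.mul_le_mul_left 72 hp0
    omega
  have hp2 : 2 * m ≤ 72 * 2 ^ (g / 36) := by
    have : 2 * m ≤ 2 * g + 2 := by omega
    omega
  -- core exponential inequality
  have hcore : (2 * g + 2) * ((2 * g + 2) * 2 ^ (g / 2 + 1)) * 2 ^ (g / 19) * (2 * m)
      ≤ 4 ^ m := by
    calc (2 * g + 2) * ((2 * g + 2) * 2 ^ (g / 2 + 1)) * 2 ^ (g / 19) * (2 * m)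
        ≤ (72 * 2 ^ (g / 36)) * ((72 * 2 ^ (g / 36)) * 2 ^ (g / 2 + 1)) * 2 ^ (g / 19)
            * (72 * 2 ^ (g / 36)) := by
          gcongr
      _ = 373248 * (2 ^ (g / 36) * 2 ^ (g / 36) * 2 ^ (g / 36) * 2 ^ (g / 2 + 1)
            * 2 ^ (g / 19)) := by ring
      _ = 373248 * 2 ^ (g / 36 + g / 36 + g / 36 + (g / 2 + 1) + g / 19) := by
          rw [← pow_add, ← pow_add, ← pow_add, ← pow_add]
      _ ≤ 2 ^ 19 * 2 ^ (g / 36 + g / 36 + g / 36 + (g / 2 + 1) + g / 19) := by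
          gcongr
          · norm_num
      _ = 2 ^ (19 + (g / 36 + g / 36 + g / 36 + (g / 2 + 1) + g / 19)) := by
          rw [← pow_add]
      _ ≤ 2 ^ (2 * m) := by
          apply Nat.pow_le_pow_right (by omega)
          omega
      _ = 4 ^ m := by
          rw [show (4 : ℕ) = 2 ^ 2 from rfl, ← pow_mul]
  have h1 : a * 2 ^ (g / 19) * (2 * m) ≤ 4 ^ m := by
    refine le_trans ?_ hcore
    gcongr
  have h2 : m * Nat.centralBinom m ≤ m * (2 * n) := Nat.mul_le_mul_left m hN
  have h3 : a * 2 ^ (g / 19) * (2 * m) ≤ m * (2 * n) :=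
    le_trans h1 (le_trans (le_of_lt hcb) h2)
  have h4 : (2 * m) * (a * 2 ^ (g / 19)) ≤ (2 * m) * n := by
    have e1 : (2 * m) * (a * 2 ^ (g / 19)) = a * 2 ^ (g / 19) * (2 * m) := by ring
    have e2 : (2 * m) * n = m * (2 * n) := by ring
    rw [e1, e2]
    exact h3
  exact Nat.le_of_mul_le_mul_left h4 (by omega)

lemma genus_set_pos (g : ℕ) (hg : 10 ≤ g) :
    1 ≤ {S : NumericalSemigroup | S.genus = g}.ncard := by
  have hN := count_lower g hg
  have := Nat.centralBinom_pos ((g - 1) / 3)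
  omega

end NumericalSemigroup

/-! ### Main theorem -/

theorem portion_infinite_chain_tendsto_zero_aux :
    Filter.Tendsto
      (fun g : ℕ =>
        (({S : NumericalSemigroup | S.genus = g ∧ InInfiniteChain S}.ncard : ℝ)) /
          ({S : NumericalSemigroup | S.genus = g}.ncard : ℝ))
      Filter.atTop (nhds 0) := by
  apply squeeze_zero' (g := fun g : ℕ => ((1 : ℝ) / 2) ^ (g / 19))
  · exact Filter.Eventually.of_forall (fun g => by positivity)
  · rw [Filter.eventually_atTop]
    refine ⟨4000, fun g hg => ?_⟩
    have hkey := NumericalSemigroup.key_ineq g hg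
    have hpos := NumericalSemigroup.genus_set_pos g (by omega)
    set a := {S : NumericalSemigroup | S.genus = g ∧ InInfiniteChain S}.ncard with ha
    set n := {S : NumericalSemigroup | S.genus = g}.ncard with hn
    have hnR : (0 : ℝ) < (n : ℝ) := by exact_mod_cast hpos
    rw [div_le_iff₀ hnR]
    have hcast : ((a * 2 ^ (g / 19) : ℕ) : ℝ) ≤ ((n : ℕ) : ℝ) := by exact_mod_cast hkey
    push_cast at hcast
    have h2pos : (0 : ℝ) < 2 ^ (g / 19) := by positivity
    rw [div_pow, one_pow]
    rw [div_mul_eq_mul_div, le_div_iff₀ h2pos]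
    linarith
  · have h1 : Filter.Tendsto (fun k : ℕ => ((1 : ℝ) / 2) ^ k) Filter.atTop (nhds 0) :=
      tendsto_pow_atTop_nhds_zero_of_lt_one (by norm_num) (by norm_num)
    have h2 : Filter.Tendsto (fun g : ℕ => g / 19) Filter.atTop Filter.atTop :=
      Filter.tendsto_atTop_atTop.mpr (fun b => ⟨19 * b, fun g hg => by omega⟩)
    exact h1.comp h2


theorem portion_infinite_chain_tendsto_zero :
    Filter.Tendsto
      (fun g : ℕ =>
        (({S : NumericalSemigroup | S.genus = g ∧ InInfiniteChain S}.ncard : ℝ)) /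
          ({S : NumericalSemigroup | S.genus = g}.ncard : ℝ))
      Filter.atTop (nhds 0) :=
  portion_infinite_chain_tendsto_zero_aux
end
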